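/- For allocation of a divisible homogeneous good, maximum weighted Nash social welfare is monotone when all valuations are concave. Precisely: let n ≥ 1 agents have valuations v_1, …, v_n : [0,1] → ℝ that are continuous, concave, strictly increasing, and satisfy v_i(x) > 0 for all x > 0. Let b and b' be entitlement vectors (positive entries summing to 1) with b 1-improving b' (b_1 > b'_1 and b_j ≤ b'_j for all j ≠ 1). Let A = (A_1, …, A_n) maximize ∏_i v_i(x_i)^{b_i} over all allocations (x_i ≥ 0, Σ x_i = 1), and let A' = (A'_1, …, A'_n) maximize ∏_i v_i(x_i)^{b'_i} over all allocations. Then A_1 ≥ A'_1; in particular v_1(A_1) ≥ v_1(A'_1), so the agent whose entitlement increased does not lose value. -/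

import Mathlib

/-!
Suppose `A' i > A i` for the agent `i` whose weight grew. Both allocations sum to one, so some
other agent `j` has `A' j < A j`. Moving a small amount `t` from `j` to `i` in `A`, and from `i`
to `j` in `A'`, stays in the simplex, so optimality bounds the marginal change of `b i * log vᵢ`
by that of `b j * log vⱼ` in `A`, and conversely in `A'`. Since each `log ∘ vₖ` is concave and
`A i + t ≤ A' i`, `A' j + t ≤ A j`, the marginals at `A` and `A'` compare the right way, and
with `b j ≤ b' j`, `b' i < b i` the two inequalities chain into a strict contradiction.
-/

open Function Real Set

theorem ConcaveOn.sub_le_sub_of_add_le {𝕜 : Type*} [Field 𝕜] [LinearOrder 𝕜]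
    [IsStrictOrderedRing 𝕜] {s : Set 𝕜} {f : 𝕜 → 𝕜} (hf : ConcaveOn 𝕜 s f) {a b t : 𝕜}
    (ha : a ∈ s) (hb : b ∈ s) (ht : 0 ≤ t) (hab : a + t ≤ b) :
    f b - f (b - t) ≤ f (a + t) - f a := by
  rcases ht.eq_or_lt with rfl | ht
  · simp
  have hba : 0 < b - a := by linarith
  set l := t / (b - a)
  have hl : l * (b - a) = t := div_mul_cancel₀ t hba.ne'
  have hl0 : 0 ≤ l := by positivity
  have hl1 : l ≤ 1 := (div_le_one hba).2 (by linarith)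
  have hleft := hf.2 ha hb (sub_nonneg.2 hl1) hl0 (sub_add_cancel 1 l)
  have hright := hf.2 ha hb hl0 (sub_nonneg.2 hl1) (add_sub_cancel l 1)
  simp only [smul_eq_mul] at hleft hright
  rw [show (1 - l) * a + l * b = a + t by linear_combination hl] at hleft
  rw [show l * a + (1 - l) * b = b - t by linear_combination -hl] at hright
  linarith

theorem ConcaveOn.log_comp {s : Set ℝ} {f : ℝ → ℝ} (hf : ConcaveOn ℝ s f) :
    ConcaveOn ℝ {x ∈ s | 0 < f x} (log ∘ f) := by
  refine ⟨hf.convex_gt 0, fun x hx y hy a b ha hb hab => ?_⟩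
  have hxy : 0 < a • f x + b • f y := by
    rcases ha.eq_or_lt with rfl | ha
    · simp_all
    · have := hx.2; have := hy.2; simp only [smul_eq_mul]; positivity
  calc a • (log ∘ f) x + b • (log ∘ f) y ≤ log (a • f x + b • f y) :=
        strictConcaveOn_log_Ioi.concaveOn.2 hx.2 hy.2 ha hb hab
    _ ≤ (log ∘ f) (a • x + b • y) := log_le_log hxy (hf.2 hx.1 hy.1 ha hb hab)

theorem ContinuousOn.nonneg_of_pos_Ioc {f : ℝ → ℝ} (hf : ContinuousOn f (Icc 0 1))
    (hpos : ∀ x ∈ Ioc (0 : ℝ) 1, 0 < f x) : ∀ x ∈ Icc (0 : ℝ) 1, 0 ≤ f x := by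
  have hclosed : IsClosed (Icc 0 1 ∩ f ⁻¹' Ici 0) :=
    hf.preimage_isClosed_of_isClosed isClosed_Icc isClosed_Ici
  have hsub : Ioc 0 1 ⊆ Icc 0 1 ∩ f ⁻¹' Ici 0 :=
    fun x hx => ⟨Ioc_subset_Icc_self hx, (hpos x hx).le⟩
  intro x hx
  rw [← closure_Ioc zero_ne_one] at hx
  exact (closure_minimal hsub hclosed hx).2

theorem exists_ne_lt_of_sum_eq {ι M : Type*} [Fintype ι] [DecidableEq ι] [AddCommGroup M]
    [LinearOrder M] [IsOrderedAddMonoid M] {x y : ι → M}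
    (hsum : ∑ k, x k = ∑ k, y k) {i : ι} (hi : x i < y i) : ∃ j ≠ i, y j < x j := by
  have hx := Finset.add_sum_erase Finset.univ x (Finset.mem_univ i)
  have hy := Finset.add_sum_erase Finset.univ y (Finset.mem_univ i)
  have hrest : ∑ k ∈ Finset.univ.erase i, y k < ∑ k ∈ Finset.univ.erase i, x k := by
    rw [← hx, ← hy] at hsum
    contrapose! hsum
    exact (add_lt_add_of_lt_of_le hi hsum).ne
  obtain ⟨j, hj, hlt⟩ := Finset.exists_lt_of_sum_lt hrest
  exact ⟨j, Finset.ne_of_mem_erase hj, hlt⟩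

variable {ι : Type*}

noncomputable def weightedNashWelfare [Fintype ι] (v : ι → ℝ → ℝ) (w x : ι → ℝ) : ℝ :=
  ∏ i, v i (x i) ^ w i

section WeightedNashWelfare

variable [Fintype ι] {v : ι → ℝ → ℝ} {w x : ι → ℝ}

theorem weightedNashWelfare_pos (hx : ∀ i, 0 < v i (x i)) : 0 < weightedNashWelfare v w x :=
  Finset.prod_pos fun i _ => rpow_pos_of_pos (hx i) _

theorem log_weightedNashWelfare (hx : ∀ i, 0 < v i (x i)) :
    log (weightedNashWelfare v w x) = ∑ i, w i * log (v i (x i)) := by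
  rw [weightedNashWelfare, log_prod fun i _ => (rpow_pos_of_pos (hx i) _).ne']
  exact Finset.sum_congr rfl fun i _ => log_rpow (hx i) _

theorem apply_pos_of_isMaxOn_weightedNashWelfare [Nonempty ι] (hw : ∀ i, 0 < w i)
    (hv₀ : ∀ i, ∀ y ∈ Icc (0 : ℝ) 1, 0 ≤ v i y) (hv : ∀ i, ∀ y ∈ Ioc (0 : ℝ) 1, 0 < v i y)
    (hx : x ∈ stdSimplex ℝ ι) (hmax : IsMaxOn (weightedNashWelfare v w) (stdSimplex ℝ ι) x)
    (i : ι) : 0 < v i (x i) := by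
  set u : ι → ℝ := fun _ => (Fintype.card ι : ℝ)⁻¹
  have hcard : (1 : ℝ) ≤ Fintype.card ι := by exact_mod_cast Fintype.card_pos
  have hu : u ∈ stdSimplex ℝ ι := ⟨fun _ => by positivity, by simp [u]⟩
  have hu_pos : ∀ k, 0 < v k (u k) := fun k =>
    hv k _ ⟨by positivity, inv_le_one_of_one_le₀ hcard⟩
  have hx_pos : 0 < weightedNashWelfare v w x :=
    (weightedNashWelfare_pos hu_pos).trans_le (hmax hu)
  refine (hv₀ i _ (mem_Icc_of_mem_stdSimplex hx i)).lt_of_ne' fun h => hx_pos.ne' ?_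
  exact Finset.prod_eq_zero (Finset.mem_univ i) (by rw [h, zero_rpow (hw i).ne'])

end WeightedNashWelfare

section Transfer

variable [DecidableEq ι]

def transfer (x : ι → ℝ) (i j : ι) (t : ℝ) : ι → ℝ :=
  update (update x i (x i + t)) j (x j - t)

variable {x : ι → ℝ} {i j : ι} {t : ℝ}

theorem transfer_apply_left (hij : i ≠ j) : transfer x i j t i = x i + t := by
  simp [transfer, hij]

theorem transfer_apply_right : transfer x i j t j = x j - t := by
  simp [transfer]

theorem transfer_apply_of_ne {k : ι} (hki : k ≠ i) (hkj : k ≠ j) :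
    transfer x i j t k = x k := by
  simp [transfer, hki, hkj]

variable [Fintype ι]

theorem sum_apply_transfer {M : Type*} [AddCommGroup M] (G : ι → ℝ → M) (hij : i ≠ j) :
    ∑ k, G k (transfer x i j t k) =
      ∑ k, G k (x k) + (G i (x i + t) - G i (x i)) + (G j (x j - t) - G j (x j)) := by
  rw [add_assoc, ← sub_eq_iff_eq_add', ← Finset.sum_sub_distrib,
    Fintype.sum_eq_add i j hij fun k hk => by rw [transfer_apply_of_ne hk.1 hk.2, sub_self],
    transfer_apply_left hij, transfer_apply_right]

theorem transfer_mem_stdSimplex (hx : x ∈ stdSimplex ℝ ι) (hij : i ≠ j) (ht : 0 ≤ t)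
    (htj : t ≤ x j) : transfer x i j t ∈ stdSimplex ℝ ι := by
  refine ⟨fun k => ?_, ?_⟩
  · by_cases hki : k = i
    · subst hki; rw [transfer_apply_left hij]; linarith [hx.1 k]
    by_cases hkj : k = j
    · subst hkj; rw [transfer_apply_right]; linarith
    · rw [transfer_apply_of_ne hki hkj]; exact hx.1 k
  · rw [sum_apply_transfer (fun _ y => y) hij, hx.2]; ring

theorem gain_le_loss_of_isMaxOn_weightedNashWelfare {v : ι → ℝ → ℝ} {w : ι → ℝ}
    (hx : x ∈ stdSimplex ℝ ι) (hmax : IsMaxOn (weightedNashWelfare v w) (stdSimplex ℝ ι) x)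
    (hx_pos : ∀ k, 0 < v k (x k)) (hij : i ≠ j) (ht : 0 ≤ t) (htj : t ≤ x j)
    (hi : 0 < v i (x i + t)) (hj : 0 < v j (x j - t)) :
    w i * (log (v i (x i + t)) - log (v i (x i))) ≤
      w j * (log (v j (x j)) - log (v j (x j - t))) := by
  have hy_pos : ∀ k, 0 < v k (transfer x i j t k) := by
    intro k
    by_cases hki : k = i
    · subst hki; rwa [transfer_apply_left hij]
    by_cases hkj : k = j
    · subst hkj; rwa [transfer_apply_right]
    · rw [transfer_apply_of_ne hki hkj]; exact hx_pos k
  have hle := log_le_log (weightedNashWelfare_pos hy_pos)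
    (hmax (transfer_mem_stdSimplex hx hij ht htj))
  rw [log_weightedNashWelfare hy_pos, log_weightedNashWelfare hx_pos,
    sum_apply_transfer (fun k y => w k * log (v k y)) hij] at hle
  linarith

end Transfer

theorem apply_le_apply_of_isMaxOn_weightedNashWelfare [Fintype ι] [DecidableEq ι]
    {v : ι → ℝ → ℝ} {b b' A A' : ι → ℝ} {i : ι} (hconc : ∀ k, ConcaveOn ℝ (Icc 0 1) (v k))
    (hmono : ∀ k, StrictMonoOn (v k) (Icc 0 1)) (hb' : ∀ k, 0 ≤ b' k) (hbi : b' i < b i)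
    (hb : ∀ j ≠ i, b j ≤ b' j) (hA : A ∈ stdSimplex ℝ ι) (hA' : A' ∈ stdSimplex ℝ ι)
    (hmaxA : IsMaxOn (weightedNashWelfare v b) (stdSimplex ℝ ι) A)
    (hmaxA' : IsMaxOn (weightedNashWelfare v b') (stdSimplex ℝ ι) A')
    (hA_pos : ∀ k, 0 < v k (A k)) (hA'_pos : ∀ k, 0 < v k (A' k)) : A' i ≤ A i := by
  by_contra! hlt
  obtain ⟨j, hji, hj⟩ := exists_ne_lt_of_sum_eq (hA.2.trans hA'.2.symm) hlt
  set t := min (A' i - A i) (A j - A' j)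
  have ht : 0 < t := lt_min (sub_pos.2 hlt) (sub_pos.2 hj)
  have hti : A i + t ≤ A' i := by linarith [min_le_left (A' i - A i) (A j - A' j)]
  have htj : A' j + t ≤ A j := by linarith [min_le_right (A' i - A i) (A j - A' j)]
  set S : ι → Set ℝ := fun k => {y ∈ Icc 0 1 | 0 < v k y}
  have hlog : ∀ k, ConcaveOn ℝ (S k) (log ∘ v k) := fun k => (hconc k).log_comp
  have hmemA : ∀ k, A k ∈ S k := fun k => ⟨mem_Icc_of_mem_stdSimplex hA k, hA_pos k⟩
  have hmemA' : ∀ k, A' k ∈ S k := fun k => ⟨mem_Icc_of_mem_stdSimplex hA' k, hA'_pos k⟩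
  have hbetween : ∀ k u {y z}, y ∈ S k → z ∈ S k → y ≤ u → u ≤ z → u ∈ S k :=
    fun k _ _ _ hy hz hyu huz => (hlog k).1.ordConnected.out hy hz ⟨hyu, huz⟩
  have hAi_t := hbetween i (A i + t) (hmemA i) (hmemA' i) (by linarith) hti
  have hA'i_t := hbetween i (A' i - t) (hmemA i) (hmemA' i) (by linarith) (by linarith)
  have hAj_t := hbetween j (A j - t) (hmemA' j) (hmemA j) (by linarith) (by linarith)
  have hA'j_t := hbetween j (A' j + t) (hmemA' j) (hmemA j) (by linarith) htj
  have hexA := gain_le_loss_of_isMaxOn_weightedNashWelfare hA hmaxA hA_pos hji.symm ht.le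
    (by linarith [hA'.1 j]) hAi_t.2 hAj_t.2
  have hexA' := gain_le_loss_of_isMaxOn_weightedNashWelfare hA' hmaxA' hA'_pos hji ht.le
    (by linarith [hA.1 i]) hA'j_t.2 hA'i_t.2
  have hconc_i := (hlog i).sub_le_sub_of_add_le (hmemA i) (hmemA' i) ht.le hti
  have hconc_j := (hlog j).sub_le_sub_of_add_le (hmemA' j) (hmemA j) ht.le htj
  simp only [comp_apply] at hconc_i hconc_j
  have hgain : 0 < log (v i (A i + t)) - log (v i (A i)) :=
    sub_pos.2 <| log_lt_log (hA_pos i) <| hmono i (hmemA i).1 hAi_t.1 (by linarith)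
  have hloss : 0 ≤ log (v j (A j)) - log (v j (A j - t)) :=
    sub_nonneg.2 <| log_le_log hAj_t.2 <| (hmono j).monotoneOn hAj_t.1 (hmemA j).1 (by linarith)
  refine lt_irrefl (b i * (log (v i (A i + t)) - log (v i (A i)))) ?_
  calc b i * (log (v i (A i + t)) - log (v i (A i)))
      ≤ b j * (log (v j (A j)) - log (v j (A j - t))) := hexA
    _ ≤ b' j * (log (v j (A j)) - log (v j (A j - t))) :=
      mul_le_mul_of_nonneg_right (hb j hji) hloss
    _ ≤ b' j * (log (v j (A' j + t)) - log (v j (A' j))) :=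
      mul_le_mul_of_nonneg_left hconc_j (hb' j)
    _ ≤ b' i * (log (v i (A' i)) - log (v i (A' i - t))) := hexA'
    _ ≤ b' i * (log (v i (A i + t)) - log (v i (A i))) :=
      mul_le_mul_of_nonneg_left hconc_i (hb' i)
    _ < b i * (log (v i (A i + t)) - log (v i (A i))) := mul_lt_mul_of_pos_right hbi hgain

theorem stmt_19 (n : ℕ) (hn : 0 < n) (v : Fin n → ℝ → ℝ)
    (hcont : ∀ i, ContinuousOn (v i) (Set.Icc 0 1))
    (hconc : ∀ i, ConcaveOn ℝ (Set.Icc 0 1) (v i))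
    (hmono : ∀ i, StrictMonoOn (v i) (Set.Icc 0 1))
    (hpos : ∀ i, ∀ x : ℝ, 0 < x → x ≤ 1 → 0 < v i x)
    (b b' : Fin n → ℝ)
    (hb : ∀ i, 0 < b i)
    (hb' : ∀ i, 0 < b' i)
    -- b 1-improves b'
    (himp1 : b' ⟨0, hn⟩ < b ⟨0, hn⟩)
    (himp2 : ∀ j, j ≠ ⟨0, hn⟩ → b j ≤ b' j)
    (A A' : Fin n → ℝ)
    (hA0 : ∀ j, 0 ≤ A j) (hA1 : ∑ j, A j = 1)
    (hA'0 : ∀ j, 0 ≤ A' j) (hA'1 : ∑ j, A' j = 1)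
    -- A maximizes WNSW under b
    (hmaxA : ∀ x : Fin n → ℝ, (∀ j, 0 ≤ x j) → ∑ j, x j = 1 →
      ∏ j, (v j (x j)) ^ (b j) ≤ ∏ j, (v j (A j)) ^ (b j))
    -- A' maximizes WNSW under b'
    (hmaxA' : ∀ x : Fin n → ℝ, (∀ j, 0 ≤ x j) → ∑ j, x j = 1 →
      ∏ j, (v j (x j)) ^ (b' j) ≤ ∏ j, (v j (A' j)) ^ (b' j)) :
    A' ⟨0, hn⟩ ≤ A ⟨0, hn⟩ ∧
      v ⟨0, hn⟩ (A' ⟨0, hn⟩) ≤ v ⟨0, hn⟩ (A ⟨0, hn⟩) := by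
  have : Nonempty (Fin n) := ⟨⟨0, hn⟩⟩
  have hA : A ∈ stdSimplex ℝ (Fin n) := ⟨hA0, hA1⟩
  have hA' : A' ∈ stdSimplex ℝ (Fin n) := ⟨hA'0, hA'1⟩
  have hmax : IsMaxOn (weightedNashWelfare v b) (stdSimplex ℝ (Fin n)) A :=
    fun x hx => hmaxA x hx.1 hx.2
  have hmax' : IsMaxOn (weightedNashWelfare v b') (stdSimplex ℝ (Fin n)) A' :=
    fun x hx => hmaxA' x hx.1 hx.2
  have hpos' : ∀ i, ∀ x ∈ Ioc (0 : ℝ) 1, 0 < v i x := fun i x hx => hpos i x hx.1 hx.2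
  have hv₀ : ∀ i, ∀ x ∈ Icc (0 : ℝ) 1, 0 ≤ v i x := fun i =>
    (hcont i).nonneg_of_pos_Ioc (hpos' i)
  have hle : A' ⟨0, hn⟩ ≤ A ⟨0, hn⟩ :=
    apply_le_apply_of_isMaxOn_weightedNashWelfare hconc hmono (fun k => (hb' k).le) himp1 himp2
      hA hA' hmax hmax' (apply_pos_of_isMaxOn_weightedNashWelfare hb hv₀ hpos' hA hmax)
      (apply_pos_of_isMaxOn_weightedNashWelfare hb' hv₀ hpos' hA' hmax')
  exact ⟨hle, (hmono _).monotoneOn (mem_Icc_of_mem_stdSimplex hA' _)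
    (mem_Icc_of_mem_stdSimplex hA _) hle⟩
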